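/- Let u be an infinite word over a finite alphabet A with language L(u) closed under reversal. Suppose v is a complete mirror return to a factor w ∈ L(u) such that v is a palindrome, b w̃ is a suffix of v, and av ∈ L(u) for some letters a, b ∈ A. Then {(a,−1),(b,+1)} is an edge of the graph Γ(w). If moreover w is a palindrome and a ≠ b, then {a,b} is an edge of the graph Θ(w). -/

import Mathlib

namespace ZDC

variable {A : Type*}

/-- The finite word `u_i u_{i+1} ⋯ u_{i+n-1}` occurring at position `i` in `u`. -/
def factorAt (u : ℕ → A) (i n : ℕ) : List A := (List.range n).map (fun j => u (i + j))

/-- `w` occurs at index `i` in the infinite word `u`. -/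
def OccursAt (u : ℕ → A) (w : List A) (i : ℕ) : Prop := w = factorAt u i w.length

/-- The language of the infinite word `u`: the set of its factors. -/
def Lang (u : ℕ → A) : Set (List A) := {w | ∃ i, OccursAt u w i}

/-- The language of `u` is closed under reversal. -/
def ClosedUnderReversal (u : ℕ → A) : Prop := ∀ w ∈ Lang u, w.reverse ∈ Lang u

/-- Number of distinct palindromic factors of a finite word (the empty word counts). -/
noncomputable def palCount (w : List A) : ℕ := {v : List A | v <:+: w ∧ v.reverse = v}.ncard

/-- Palindromic defect of a finite word: `|w| + 1 - p(w)`. -/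
noncomputable def wordDefect (w : List A) : ℕ := w.length + 1 - palCount w

/-- Palindromic defect of an infinite word: sup of defects of its factors, in `ℕ∞`. -/
noncomputable def Defect (u : ℕ → A) : ℕ∞ := ⨆ w ∈ Lang u, (wordDefect w : ℕ∞)

/-- `u` contains infinitely many palindromic factors. -/
def Palindromic (u : ℕ → A) : Prop := ∀ N, ∃ w ∈ Lang u, N ≤ w.length ∧ w.reverse = w

/-- `u` is (purely) periodic: `u = zzz⋯` for a nonempty `z`. -/
def Periodic (u : ℕ → A) : Prop := ∃ p, 0 < p ∧ ∀ n, u (n + p) = u n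

/-- `u` is eventually periodic: `u = v zzz⋯`. -/
def EventuallyPeriodic (u : ℕ → A) : Prop := ∃ p, 0 < p ∧ ∃ N, ∀ n ≥ N, u (n + p) = u n

/-- `r` is a complete return word to `w` in `u`: it stretches from one occurrence of `w`
to the next one (inclusively). -/
def IsCompleteReturn (u : ℕ → A) (w r : List A) : Prop :=
  ∃ i j, i < j ∧ OccursAt u w i ∧ OccursAt u w j ∧
    (∀ k, i < k → k < j → ¬ OccursAt u w k) ∧
    r = factorAt u i (j + w.length - i)

/-- `c` is a complete mirror return to `w` in `u`. -/
def IsCompleteMirrorReturn (u : ℕ → A) (w c : List A) : Prop :=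
  c ∈ Lang u ∧
  ¬ w <:+: (c.drop 1).dropLast ∧ ¬ w.reverse <:+: (c.drop 1).dropLast ∧
  ((w <+: c ∧ w.reverse <:+ c) ∨ (w.reverse <+: c ∧ w <:+ c))

/-- Occurrences of `w` and its reversal alternate in `u`. -/
def Alternate (u : ℕ → A) (w : List A) : Prop :=
  (∀ i j, i < j → OccursAt u w i → OccursAt u w j →
    (∀ k, i < k → k < j → ¬ OccursAt u w k) →
    ∃ k, i ≤ k ∧ k ≤ j ∧ OccursAt u w.reverse k) ∧
  (∀ i j, i < j → OccursAt u w.reverse i → OccursAt u w.reverse j →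
    (∀ k, i < k → k < j → ¬ OccursAt u w.reverse k) →
    ∃ k, i ≤ k ∧ k ≤ j ∧ OccursAt u w k)

/-- Left extensions `E⁻(w)`. -/
def Eminus (u : ℕ → A) (w : List A) : Set A := {a | a :: w ∈ Lang u}

/-- Right extensions `E⁺(w)`. -/
def Eplus (u : ℕ → A) (w : List A) : Set A := {b | w ++ [b] ∈ Lang u}

/-- Bilateral extensions `E(w)`. -/
def Eboth (u : ℕ → A) (w : List A) : Set (A × A) := {p | p.1 :: (w ++ [p.2]) ∈ Lang u}

/-- Symmetric bilateral extensions `E⁼(w)`. -/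
def Esym (u : ℕ → A) (w : List A) : Set A := {a | a :: (w ++ [a]) ∈ Lang u}

/-- Bilateral multiplicity `m(w) = #E(w) − #E⁺(w) − #E⁻(w) + 1`. -/
noncomputable def mult (u : ℕ → A) (w : List A) : ℤ :=
  ((Eboth u w).ncard : ℤ) - (Eplus u w).ncard - (Eminus u w).ncard + 1

/-- `w` is a bispecial factor of `u`. -/
def Bispecial (u : ℕ → A) (w : List A) : Prop :=
  2 ≤ (Eminus u w).ncard ∧ 2 ≤ (Eplus u w).ncard

/-- The bipartite extension graph `Γ(w)` with vertex set `E⁻(w) ⊔ E⁺(w)`. -/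
def GammaGraph (u : ℕ → A) (w : List A) : SimpleGraph (↥(Eminus u w) ⊕ ↥(Eplus u w)) :=
  SimpleGraph.fromRel (fun x y =>
    ∃ (a : ↥(Eminus u w)) (b : ↥(Eplus u w)),
      x = Sum.inl a ∧ y = Sum.inr b ∧ ((a : A), (b : A)) ∈ Eboth u w)

/-- The graph `Θ(w)` on the vertex set `E⁻(w)` for a palindrome `w`. -/
def ThetaGraph (u : ℕ → A) (w : List A) : SimpleGraph (↥(Eminus u w)) :=
  SimpleGraph.fromRel (fun a b => ((a : A), (b : A)) ∈ Eboth u w)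

/-- Factor complexity `C(n)`. -/
noncomputable def complexity (u : ℕ → A) (n : ℕ) : ℕ :=
  {w ∈ Lang u | w.length = n}.ncard

/-- Palindromic complexity `P(n)`. -/
noncomputable def palComplexity (u : ℕ → A) (n : ℕ) : ℕ :=
  {w ∈ Lang u | w.length = n ∧ w.reverse = w}.ncard

/-- Extension of a morphism (given by its letter images) to finite words. -/
def Apply (φ : A → List A) (x : List A) : List A := x.flatMap φ

/-- A morphism is primitive if some power maps each letter to a word containing all letters. -/
def Primitive (φ : A → List A) : Prop :=
  ∃ k, 1 ≤ k ∧ ∀ a b : A, b ∈ (Apply φ)^[k] [a]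

/-- `u` is a fixed point of `φ`: the image of every prefix of `u` is again a prefix of `u`. -/
def IsFixedPoint (φ : A → List A) (u : ℕ → A) : Prop :=
  ∀ n, Apply φ (factorAt u 0 n) = factorAt u 0 (Apply φ (factorAt u 0 n)).length

/-- `ψ ▷ φ`: `ψ` is a left conjugate of `φ` with conjugate word `w`,
i.e. `φ(a)w = wψ(a)` for every letter `a`. -/
def LeftConj (ψ φ : A → List A) (w : List A) : Prop :=
  ∀ a, φ a ++ w = w ++ ψ a

/-- A morphism is cyclic if all images of letters are powers of a common word. -/
def Cyclic (φ : A → List A) : Prop :=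
  ∃ w : List A, ∀ a, ∃ k : ℕ, φ a = (List.replicate k w).flatten

/-- First letter (as an `Option`) of the image of a letter. -/
def Fst (φ : A → List A) : A → Option A := fun a => (φ a).head?

/-- Last letter (as an `Option`) of the image of a letter. -/
def Lst (φ : A → List A) : A → Option A := fun a => (φ a).getLast?

/-- `φL` is the leftmost conjugate of `φ`: a left conjugate whose first-letter map
is not constant. -/
def IsLeftmostConj (φL φ : A → List A) : Prop :=
  (∃ w, LeftConj φL φ w) ∧ ¬ (∀ a b, Fst φL a = Fst φL b)

/-- `φR` is the rightmost conjugate of `φ`: a right conjugate whose last-letter map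
is not constant. -/
def IsRightmostConj (φR φ : A → List A) : Prop :=
  (∃ w, LeftConj φ φR w) ∧ ¬ (∀ a b, Lst φR a = Lst φR b)

/-- A marked morphism: acyclic, and the first-letter map of its leftmost conjugate and
the last-letter map of its rightmost conjugate are injective. -/
def Marked (φ : A → List A) : Prop :=
  ¬ Cyclic φ ∧
  (∃ φL, IsLeftmostConj φL φ ∧ Function.Injective (Fst φL)) ∧
  (∃ φR, IsRightmostConj φR φ ∧ Function.Injective (Lst φR))

end ZDC

/-!
Reversing the palindrome `v` turns its suffix `b w̃` into the prefix `w b`, so `a w b` is a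
factor of `a v`. When `w` is a palindrome, `b w = b w̃` is itself a factor of `v`.
-/

namespace ZDC

variable {A : Type*}

theorem factorAt_add (u : ℕ → A) (i m n : ℕ) :
    factorAt u i (m + n) = factorAt u i m ++ factorAt u (i + m) n := by
  simp [factorAt, List.range_add, add_assoc]

theorem mem_lang_of_infix {u : ℕ → A} {x y : List A} (hxy : x <:+: y) (hy : y ∈ Lang u) :
    x ∈ Lang u := by
  obtain ⟨s, t, rfl⟩ := hxy
  obtain ⟨i, hocc⟩ := hy
  refine ⟨i + s.length, ?_⟩
  rw [OccursAt, List.length_append, List.length_append, factorAt_add, factorAt_add] at hocc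
  have hsx := (List.append_inj hocc (by simp [factorAt])).1
  exact (List.append_inj hsx (by simp [factorAt])).2

theorem fst_mem_eminus_of_mem_eboth {u : ℕ → A} {w : List A} {a b : A}
    (h : (a, b) ∈ Eboth u w) : a ∈ Eminus u w :=
  mem_lang_of_infix ⟨[], [b], by simp⟩ h

theorem snd_mem_eplus_of_mem_eboth {u : ℕ → A} {w : List A} {a b : A}
    (h : (a, b) ∈ Eboth u w) : b ∈ Eplus u w :=
  mem_lang_of_infix ⟨[a], [], by simp⟩ h

theorem append_singleton_prefix_of_cons_reverse_suffix {w v : List A} {b : A}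
    (hvpal : v.reverse = v) (hsuf : b :: w.reverse <:+ v) : w ++ [b] <+: v := by
  simpa [hvpal] using List.reverse_prefix.mpr hsuf

theorem mem_eboth_of_palindrome_of_suffix {u : ℕ → A} {w v : List A} {a b : A}
    (hvpal : v.reverse = v) (hsuf : b :: w.reverse <:+ v) (hav : a :: v ∈ Lang u) :
    (a, b) ∈ Eboth u w := by
  obtain ⟨t, rfl⟩ := append_singleton_prefix_of_cons_reverse_suffix hvpal hsuf
  exact mem_lang_of_infix ⟨[], t, by simp⟩ hav

end ZDC

open ZDC in
theorem stmt_10_general {A : Type*} (u : ℕ → A) (w v : List A) (a b : A)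
    (hvpal : v.reverse = v)
    (hsuf : b :: w.reverse <:+ v) (hav : a :: v ∈ Lang u) :
    (∃ (ha : a ∈ Eminus u w) (hb : b ∈ Eplus u w),
      (GammaGraph u w).Adj (Sum.inl ⟨a, ha⟩) (Sum.inr ⟨b, hb⟩)) ∧
    (w.reverse = w → a ≠ b →
      ∃ (ha : a ∈ Eminus u w) (hb : b ∈ Eminus u w),
        (ThetaGraph u w).Adj ⟨a, ha⟩ ⟨b, hb⟩) := by
  have hab := mem_eboth_of_palindrome_of_suffix hvpal hsuf hav
  have ha := fst_mem_eminus_of_mem_eboth hab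
  refine ⟨⟨ha, snd_mem_eplus_of_mem_eboth hab, ?_⟩, fun hwpal hne => ?_⟩
  · rw [GammaGraph, SimpleGraph.fromRel_adj]
    exact ⟨by simp, Or.inl ⟨_, _, rfl, rfl, hab⟩⟩
  · have hbw : b :: w ∈ Lang u :=
      mem_lang_of_infix (hwpal ▸ (hsuf.trans (List.suffix_cons a v)).isInfix) hav
    refine ⟨ha, hbw, ?_⟩
    rw [ThetaGraph, SimpleGraph.fromRel_adj]
    exact ⟨fun h => hne (congrArg Subtype.val h), Or.inl hab⟩

open ZDC in
/-- Suppose `L(u)` is closed under reversal, `v` is a palindromic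
complete mirror return to `w` such that `b w̃` is a suffix of `v` and `av ∈ L(u)`.
Then `{(a,−1),(b,+1)}` is an edge of `Γ(w)`; if moreover `w` is a palindrome and
`a ≠ b`, then `{a,b}` is an edge of `Θ(w)`. -/
theorem stmt_10 {A : Type*} [Fintype A] (u : ℕ → A) (w v : List A) (a b : A)
    (hclosed : ClosedUnderReversal u)
    (hmr : IsCompleteMirrorReturn u w v) (hvpal : v.reverse = v)
    (hsuf : b :: w.reverse <:+ v) (hav : a :: v ∈ Lang u) :
    (∃ (ha : a ∈ Eminus u w) (hb : b ∈ Eplus u w),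
      (GammaGraph u w).Adj (Sum.inl ⟨a, ha⟩) (Sum.inr ⟨b, hb⟩)) ∧
    (w.reverse = w → a ≠ b →
      ∃ (ha : a ∈ Eminus u w) (hb : b ∈ Eminus u w),
        (ThetaGraph u w).Adj ⟨a, ha⟩ ⟨b, hb⟩) :=
  stmt_10_general u w v a b hvpal hsuf hav
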